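/- Let {α_n}_{n≥1} be a family of Dirichlet convolution polynomials. Then for every n ≥ 2 and every x ∈ ℂ, α_n(x) = ∑_{k=1}^{Ω(n)} (x^k/k!) · ∑_{n=d_1 d_2 ⋯ d_k, each d_i ≥ 2} α̂_{d_1}(0) α̂_{d_2}(0) ⋯ α̂_{d_k}(0), where the inner sum is over all ordered k-tuples (d_1,…,d_k) of integers d_i ≥ 2 with product n. -/

import Mathlib

/-- A family of Dirichlet convolution polynomials: `α 1` is the constant polynomial `1`
and for all `n ≥ 1` and all complex `x, y`,
`α n (x+y) = ∑_{d ∣ n} α d (x) · α (n/d) (y)`. -/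
def IsDirichletConvPolyFamily (α : ℕ → Polynomial ℂ) : Prop :=
  α 1 = 1 ∧ ∀ n : ℕ, 1 ≤ n → ∀ x y : ℂ,
    (α n).eval (x + y) = ∑ d ∈ n.divisors, (α d).eval x * (α (n / d)).eval y

/-- Sum over all ordered `k`-tuples `(d₁,…,d_k)` of integers `dᵢ ≥ 2` with product `n`
of the products `a d₁ ⋯ a d_k`. -/
noncomputable def tupleProdSum (a : ℕ → ℂ) (n k : ℕ) : ℂ :=
  ∑ d ∈ (Fintype.piFinset fun _ : Fin k => Finset.range (n + 1)).filter
      (fun d => (∀ i, 2 ≤ d i) ∧ ∏ i, d i = n), ∏ i, a (d i)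

open Finset Polynomial ArithmeticFunction
private lemma tps_zero (a : ℕ → ℂ) (n : ℕ) : tupleProdSum a n 0 = if n = 1 then 1 else 0 := by
  unfold tupleProdSum
  simp [Finset.sum_filter, eq_comm]
  split <;> simp

private lemma tps_succ (a : ℕ → ℂ) (n k : ℕ) (hn : 1 ≤ n) :
    tupleProdSum a n (k+1) =
      ∑ m ∈ n.divisors.filter (fun m => 2 ≤ m), a m * tupleProdSum a (n/m) k := by
  have hn0 : n ≠ 0 := by omega
  unfold tupleProdSum
  simp_rw [Finset.mul_sum]
  rw [Finset.sum_sigma']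
  refine Finset.sum_nbij' (fun d => ⟨d 0, Fin.tail d⟩) (fun p => Fin.cons p.1 p.2) ?_ ?_ ?_ ?_ ?_
  · intro d hd
    simp only [Finset.mem_filter, Fintype.mem_piFinset, Finset.mem_range, Nat.mem_divisors,
      Finset.mem_sigma] at hd ⊢
    obtain ⟨hr, h2, hp⟩ := hd
    have hsplit : n = d 0 * ∏ i : Fin k, d i.succ := by rw [← hp, Fin.prod_univ_succ]
    have hd0 : d 0 ∣ n := ⟨_, hsplit⟩
    have h02 : 2 ≤ d 0 := h2 0
    have hP : (∏ i : Fin k, d i.succ) = n / d 0 := by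
      rw [hsplit]; exact (Nat.mul_div_cancel_left _ (by omega)).symm
    have hPpos : 0 < ∏ i : Fin k, d i.succ :=
      Nat.pos_of_ne_zero (fun h => hn0 (by rw [hsplit, h, mul_zero]))
    refine ⟨⟨⟨hd0, hn0⟩, h02⟩, fun i => ?_, fun i => h2 i.succ, hP⟩
    have : d i.succ ∣ ∏ i : Fin k, d i.succ :=
      Finset.dvd_prod_of_mem (fun i => d i.succ) (Finset.mem_univ i)
    have := Nat.le_of_dvd hPpos this
    show d i.succ < n / d 0 + 1
    omega
  · rintro ⟨m, t⟩ hp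
    simp only [Finset.mem_sigma, Finset.mem_filter, Fintype.mem_piFinset, Finset.mem_range,
      Nat.mem_divisors] at hp ⊢
    obtain ⟨⟨⟨hmd, -⟩, hm2⟩, ht, ht2, htp⟩ := hp
    have hmn : m ≤ n := Nat.le_of_dvd (by omega) hmd
    refine ⟨fun i => ?_, fun i => ?_, ?_⟩
    · refine Fin.cases ?_ ?_ i
      · simpa using by omega
      · intro j; simpa using lt_of_lt_of_le (ht j) (show n / m + 1 ≤ n + 1 by
          have := Nat.div_le_self n m; omega)
    · refine Fin.cases ?_ ?_ i
      · simpa using hm2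
      · intro j; simpa using ht2 j
    · rw [Fin.prod_univ_succ]
      simp [htp, Nat.mul_div_cancel' hmd]
  · intro d _; exact Fin.cons_self_tail d
  · rintro ⟨m, t⟩ _; simp
  · intro d _
    rw [Fin.prod_univ_succ]
    rfl

private lemma omega_pos {m : ℕ} (hm : 2 ≤ m) : 1 ≤ ArithmeticFunction.cardFactors m := by
  obtain ⟨p, hp, hpd⟩ := Nat.exists_prime_and_dvd (show m ≠ 1 by omega)
  have : p ∈ m.primeFactorsList := (Nat.mem_primeFactorsList (show m ≠ 0 by omega)).mpr ⟨hp, hpd⟩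
  rw [cardFactors_apply]
  exact List.length_pos_iff.mpr (fun h => by simp [h] at this)

private lemma omega_div_lt {n m : ℕ} (hn : 1 ≤ n) (hm : 2 ≤ m) (hd : m ∣ n) :
    ArithmeticFunction.cardFactors (n / m) < ArithmeticFunction.cardFactors n := by
  have h1 : n = m * (n / m) := (Nat.mul_div_cancel' hd).symm
  have h2 : n / m ≠ 0 := by
    have := Nat.le_of_dvd (by omega) hd
    have := Nat.div_pos this (by omega)
    omega
  have := cardFactors_mul (show m ≠ 0 by omega) h2
  rw [← h1] at this
  have := omega_pos hm
  omega

private lemma tps_vanish (a : ℕ → ℂ) : ∀ k n : ℕ, 1 ≤ n → ArithmeticFunction.cardFactors n < k →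
    tupleProdSum a n k = 0 := by
  intro k
  induction k with
  | zero => intro n hn h; omega
  | succ k ih =>
    intro n hn h
    rw [tps_succ a n k hn]
    refine Finset.sum_eq_zero fun m hm => ?_
    simp only [Finset.mem_filter, Nat.mem_divisors] at hm
    obtain ⟨⟨hmd, -⟩, hm2⟩ := hm
    have h1 : 1 ≤ n / m := Nat.div_pos (Nat.le_of_dvd (by omega) hmd) (by omega)
    have := omega_div_lt hn hm2 hmd
    rw [ih (n/m) h1 (by omega), mul_zero]

private lemma deriv_conv {α : ℕ → ℂ[X]} (hα : IsDirichletConvPolyFamily α) (n : ℕ) (hn : 1 ≤ n) :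
    derivative (α n) = ∑ d ∈ n.divisors, C ((derivative (α (n/d))).eval 0) * α d := by
  apply Polynomial.funext
  intro x
  have key : (α n).comp (C x + X) = ∑ d ∈ n.divisors, C ((α d).eval x) * α (n/d) := by
    apply Polynomial.funext
    intro y
    rw [eval_comp]
    simp only [eval_add, eval_C, eval_X, eval_finset_sum, eval_mul]
    exact hα.2 n hn x y
  have h1 := congrArg derivative key
  rw [derivative_comp] at h1
  have h2 := congrArg (eval 0) h1
  simp only [derivative_add, derivative_C, derivative_X, zero_add, one_mul, eval_mul, eval_comp,
    eval_add, eval_C, eval_X, add_zero, derivative_sum, derivative_mul, derivative_C, zero_mul,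
    eval_finset_sum, eval_one] at h2
  rw [h2]
  simp only [eval_finset_sum, eval_mul, eval_C]
  exact Finset.sum_congr rfl fun d _ => by ring

private lemma main_eq (α : ℕ → Polynomial ℂ) (hα : IsDirichletConvPolyFamily α)
    (αhat : ℕ → Polynomial ℂ)
    (hhat : ∀ n : ℕ, 2 ≤ n → Polynomial.X * αhat n = α n) :
    ∀ n : ℕ, 2 ≤ n → α n = ∑ k ∈ Finset.Icc 1 (ArithmeticFunction.cardFactors n),
      C (tupleProdSum (fun d => (αhat d).eval 0) n k / (Nat.factorial k : ℂ)) * X ^ k := by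
  set a : ℕ → ℂ := fun d => (αhat d).eval 0 with ha
  have cder_hat : ∀ m : ℕ, 2 ≤ m → (derivative (α m)).eval 0 = a m := by
    intro m hm
    rw [← hhat m hm]
    simp [derivative_mul, ha]
  have cder_one : (derivative (α 1)).eval 0 = 0 := by
    rw [hα.1]; simp
  intro n
  induction n using Nat.strong_induction_on with
  | _ n ih =>
  intro hn
  have hn1 : 1 ≤ n := by omega
  have hn0 : n ≠ 0 := by omega
  have hΩ : 1 ≤ ArithmeticFunction.cardFactors n := omega_pos hn
  set Ωn := ArithmeticFunction.cardFactors n with hΩn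
  -- Step C: termwise identification
  have stepC : ∀ m ∈ n.divisors.filter (fun m => 2 ≤ m),
      α (n/m) = ∑ j ∈ Finset.range Ωn,
        C (tupleProdSum a (n/m) j / (Nat.factorial j : ℂ)) * X ^ j := by
    intro m hm
    simp only [Finset.mem_filter, Nat.mem_divisors] at hm
    obtain ⟨⟨hmd, -⟩, hm2⟩ := hm
    have hdm1 : 1 ≤ n / m := Nat.div_pos (Nat.le_of_dvd (by omega) hmd) (by omega)
    have hΩd : ArithmeticFunction.cardFactors (n/m) < Ωn := omega_div_lt hn1 hm2 hmd
    rcases eq_or_lt_of_le hdm1 with h1 | h2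
    · -- n/m = 1
      rw [← h1, hα.1]
      symm
      rw [Finset.sum_eq_single 0 (fun j hj hj0 => by
          rw [tps_vanish a j 1 le_rfl (by simpa using Nat.pos_of_ne_zero hj0)]; simp)
        (fun h => absurd (Finset.mem_range.mpr (by omega)) h)]
      simp [tps_zero]
    · -- n/m ≥ 2
      have hd2 : 2 ≤ n / m := h2
      have hlt : n / m < n := Nat.div_lt_self (by omega) (by omega)
      rw [ih (n/m) hlt hd2]
      apply Finset.sum_subset
      · intro k hk
        simp only [Finset.mem_Icc] at hk
        exact Finset.mem_range.mpr (by omega)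
      · intro j hj hj'
        simp only [Finset.mem_Icc, not_and_or, not_le] at hj'
        rcases hj' with h | h
        · interval_cases j
          rw [tps_zero]
          simp [show ¬ (n/m = 1) by omega]
        · rw [tps_vanish a j (n/m) hdm1 h]
          simp
  -- Step B : derivative of α n
  have stepB : derivative (α n) =
      ∑ m ∈ n.divisors.filter (fun m => 2 ≤ m), C (a m) *
        ∑ j ∈ Finset.range Ωn, C (tupleProdSum a (n/m) j / (Nat.factorial j : ℂ)) * X ^ j := by
    rw [deriv_conv hα n hn1]
    have e1 : ∑ d ∈ n.divisors, C ((derivative (α (n/d))).eval 0) * α d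
        = ∑ m ∈ n.divisors, C ((derivative (α m)).eval 0) * α (n/m) := by
      rw [← Nat.sum_div_divisors n (fun m => C ((derivative (α m)).eval 0) * α (n/m))]
      refine Finset.sum_congr rfl fun d hd => ?_
      rw [Nat.div_div_self (Nat.mem_divisors.mp hd).1 hn0]
    rw [e1]
    rw [← Finset.sum_filter_of_ne (p := fun m => 2 ≤ m)]
    · refine Finset.sum_congr rfl fun m hm => ?_
      have hm' := hm
      simp only [Finset.mem_filter, Nat.mem_divisors] at hm'
      rw [cder_hat m hm'.2, stepC m hm]
    · intro m hm hne
      by_contra hc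
      have hm1 : m = 1 := by
        have h1 := (Nat.mem_divisors.mp hm).1
        have := Nat.pos_of_dvd_of_pos h1 (by omega)
        omega
      rw [hm1, cder_one] at hne
      simp at hne
  -- Step A : derivative of RHS polynomial
  set P : ℂ[X] := ∑ k ∈ Finset.Icc 1 Ωn, C (tupleProdSum a n k / (Nat.factorial k : ℂ)) * X ^ k
    with hP
  have stepA : derivative P =
      ∑ m ∈ n.divisors.filter (fun m => 2 ≤ m), C (a m) *
        ∑ j ∈ Finset.range Ωn, C (tupleProdSum a (n/m) j / (Nat.factorial j : ℂ)) * X ^ j := by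
    rw [hP, derivative_sum]
    have e2 : ∀ k ∈ Finset.Icc 1 Ωn,
        derivative (C (tupleProdSum a n k / (Nat.factorial k : ℂ)) * X ^ k)
          = C (tupleProdSum a n k / (Nat.factorial (k-1) : ℂ)) * X ^ (k-1) := by
      intro k hk
      simp only [Finset.mem_Icc] at hk
      obtain ⟨hk1, -⟩ := hk
      rw [derivative_C_mul, derivative_X_pow, ← mul_assoc, ← C_mul]
      congr 1
      rw [C_inj]
      have hfac : (Nat.factorial k : ℂ) = (k : ℂ) * (Nat.factorial (k-1) : ℂ) := by
        obtain ⟨j, rfl⟩ : ∃ j, k = j + 1 := ⟨k - 1, by omega⟩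
        push_cast [Nat.factorial_succ]
        simp
      rw [hfac]
      have h1 : (k : ℂ) ≠ 0 := Nat.cast_ne_zero.mpr (by omega)
      have h2 : ((Nat.factorial (k-1) : ℕ) : ℂ) ≠ 0 := Nat.cast_ne_zero.mpr (Nat.factorial_ne_zero _)
      field_simp
    rw [Finset.sum_congr rfl e2]
    rw [show Finset.Icc 1 Ωn = Finset.Ico 1 (Ωn + 1) from (Finset.Ico_add_one_right_eq_Icc ..).symm]
    rw [Finset.sum_Ico_eq_sum_range]
    simp only [Nat.add_sub_cancel, Nat.add_sub_cancel_left]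
    have e3 : ∀ j ∈ Finset.range Ωn,
        C (tupleProdSum a n (1 + j) / (Nat.factorial j : ℂ)) * X ^ j
        = ∑ m ∈ n.divisors.filter (fun m => 2 ≤ m),
            C (a m) * (C (tupleProdSum a (n/m) j / (Nat.factorial j : ℂ)) * X ^ j) := by
      intro j hj
      rw [show 1 + j = j + 1 by omega, tps_succ a n j hn1, Finset.sum_div, map_sum,
        Finset.sum_mul]
      refine Finset.sum_congr rfl fun m _ => ?_
      rw [mul_div_assoc, C_mul, mul_assoc]
    rw [Finset.sum_congr rfl e3, Finset.sum_comm]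
    exact Finset.sum_congr rfl fun m _ => (Finset.mul_sum _ _ _).symm
  -- Step D: conclude
  have hder : derivative (α n - P) = 0 := by
    rw [derivative_sub, stepB, stepA, sub_self]
  have hconst := Polynomial.eq_C_of_derivative_eq_zero hder
  have heval0 : (α n - P).eval 0 = 0 := by
    have h1 : (α n).eval 0 = 0 := by rw [← hhat n hn]; simp
    have h2 : P.eval 0 = 0 := by
      rw [hP, eval_finset_sum]
      refine Finset.sum_eq_zero fun k hk => ?_
      simp only [Finset.mem_Icc] at hk
      simp [zero_pow (show k ≠ 0 by omega)]
    rw [eval_sub, h1, h2, sub_zero]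
  have hz : α n - P = 0 := by
    rw [hconst] at heval0 ⊢
    simp only [eval_C] at heval0
    rw [heval0, Polynomial.C_0]
  exact sub_eq_zero.mp hz

theorem stmt_3 (α : ℕ → Polynomial ℂ) (hα : IsDirichletConvPolyFamily α)
    (αhat : ℕ → Polynomial ℂ)
    (hhat : ∀ n : ℕ, 2 ≤ n → Polynomial.X * αhat n = α n)
    (n : ℕ) (hn : 2 ≤ n) (x : ℂ) :
    (α n).eval x = ∑ k ∈ Finset.Icc 1 (ArithmeticFunction.cardFactors n),
      x ^ k / (Nat.factorial k : ℂ) * tupleProdSum (fun d => (αhat d).eval 0) n k := by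
  rw [main_eq α hα αhat hhat n hn]
  rw [Polynomial.eval_finset_sum]
  refine Finset.sum_congr rfl fun k _ => ?_
  simp only [Polynomial.eval_mul, Polynomial.eval_C, Polynomial.eval_pow, Polynomial.eval_X]
  ring
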